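/- arXiv:2312.14420 — 3 statements merged into one kernel-verified Lean document; each statement's English description precedes it below -/
import Mathlib

section
/- Let w₁, w₂, … be i.i.d. random variables, strictly positive almost surely, with mean μ = E w₁ > 0, variance σ² = Var(w₁) > 0, and E w₁^k < ∞ for every positive integer k. For each p set w̄_p = p^{−1}∑_{j=1}^p w_j. Then lim_{p→∞} E[(w₁/w̄_p − 1)⁴] = E[(w₁/μ − 1)⁴]. -/
/-!
By the strong law of large numbers `w̄_p → μ` almost surely, so the integrand converges pointwise
to `(w₁/μ - 1)⁴`. On the event `{w̄_p > μ/2}` it is dominated by the integrable `1 + (2 w₁/μ)⁴`,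
so dominated convergence applies there. On the complement, `0 ≤ w₁/w̄_p ≤ p` bounds the integrand by
`1 + p⁴`, while a Chernoff bound for the lower tail of a sum of nonnegative i.i.d. variables
(which only needs a second moment, through `exp (-x) ≤ 1 - x + x²/2` for `x ≥ 0`) shows that the
complement has probability at most `rᵖ` for some `r < 1`. Hence its contribution is `O(p⁴ rᵖ) → 0`.
-/

open MeasureTheory ProbabilityTheory Filter Finset Real
open scoped Topology

lemma Real.exp_neg_le_one_sub_add_sq_div_two {x : ℝ} (hx : 0 ≤ x) :
    exp (-x) ≤ 1 - x + x ^ 2 / 2 := by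
  rw [exp_neg, inv_le_iff_one_le_mul₀ (exp_pos x)]
  -- `(1 - x + x²/2) (1 + x + x²/2) = 1 + x⁴/4`
  nlinarith [quadratic_le_exp_of_nonneg hx, sq_nonneg (x ^ 2)]

lemma norm_sub_one_pow_four_le {x y : ℝ} (hx : 0 ≤ x) (hxy : x ≤ y) :
    ‖(x - 1) ^ 4‖ ≤ 1 + y ^ 4 := by
  rw [Real.norm_of_nonneg (by positivity)]
  rcases le_total x 1 with h | h
  · have : (x - 1) ^ 2 ≤ 1 := by nlinarith
    nlinarith [pow_nonneg (sq_nonneg y) 2]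
  · nlinarith [pow_le_pow_left₀ (by linarith : 0 ≤ x - 1) (by linarith : x - 1 ≤ y) 4]

lemma div_sum_range_div_mem_Icc {x : ℕ → ℝ} (hx : ∀ j, 0 ≤ x j) (p : ℕ) :
    x 0 / ((∑ j ∈ range p, x j) / p) ∈ Set.Icc 0 (p : ℝ) := by
  have hsum : 0 ≤ ∑ j ∈ range p, x j := sum_nonneg fun j _ => hx j
  refine ⟨div_nonneg (hx 0) (div_nonneg hsum p.cast_nonneg), ?_⟩
  rw [div_div_eq_mul_div]
  refine div_le_of_le_mul₀ hsum p.cast_nonneg ?_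
  rcases p.eq_zero_or_pos with rfl | hp
  · simp
  · rw [mul_comm]
    exact mul_le_mul_of_nonneg_left (single_le_sum (fun j _ => hx j) (mem_range.2 hp))
      p.cast_nonneg

lemma tendsto_one_add_pow_mul_of_le_geometric {u : ℕ → ℝ} {r : ℝ} (k : ℕ)
    (hu0 : ∀ n, 0 ≤ u n) (hu : ∀ n, u n ≤ r ^ n) (hr0 : 0 ≤ r) (hr1 : r < 1) :
    Tendsto (fun n : ℕ => (1 + (n : ℝ) ^ k) * u n) atTop (𝓝 0) := by
  have hgeom : Tendsto (fun n : ℕ => (1 + (n : ℝ) ^ k) * r ^ n) atTop (𝓝 0) := by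
    simpa [add_mul] using (tendsto_pow_const_mul_const_pow_of_lt_one 0 hr0 hr1).add
      (tendsto_pow_const_mul_const_pow_of_lt_one k hr0 hr1)
  exact squeeze_zero (fun n => mul_nonneg (by positivity) (hu0 n))
    (fun n => mul_le_mul_of_nonneg_left (hu n) (by positivity)) hgeom

theorem tendsto_integral_of_dominated_on_of_tendsto_mul_measure_compl
    {Ω E : Type*} [MeasurableSpace Ω] {μ : Measure Ω} [IsFiniteMeasure μ]
    [NormedAddCommGroup E] [NormedSpace ℝ E] [CompleteSpace E]
    {f : ℕ → Ω → E} {F : Ω → E} {g : Ω → ℝ} {A : ℕ → Set Ω} {C : ℕ → ℝ}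
    (hf : ∀ n, AEStronglyMeasurable (f n) μ) (hA : ∀ n, MeasurableSet (A n))
    (hg : Integrable g μ) (h_dom : ∀ n, ∀ᵐ ω ∂μ, ω ∈ A n → ‖f n ω‖ ≤ g ω)
    (h_bdd : ∀ n, ∀ᵐ ω ∂μ, ‖f n ω‖ ≤ C n)
    (h_small : Tendsto (fun n => C n * μ.real (A n)ᶜ) atTop (𝓝 0))
    (h_mem : ∀ᵐ ω ∂μ, ∀ᶠ n in atTop, ω ∈ A n)
    (h_lim : ∀ᵐ ω ∂μ, Tendsto (fun n => f n ω) atTop (𝓝 (F ω))) :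
    Tendsto (fun n => ∫ ω, f n ω ∂μ) atTop (𝓝 (∫ ω, F ω ∂μ)) := by
  have h_on : Tendsto (fun n => ∫ ω in A n, f n ω ∂μ) atTop (𝓝 (∫ ω, F ω ∂μ)) := by
    simp_rw [← integral_indicator (hA _)]
    refine tendsto_integral_of_dominated_convergence (fun ω => ‖g ω‖)
      (fun n => (hf n).indicator (hA n)) hg.norm (fun n => ?_) ?_
    · filter_upwards [h_dom n] with ω hω
      by_cases hmem : ω ∈ A n
      · simpa [hmem] using (hω hmem).trans (le_abs_self _)
      · simp [hmem]
    · filter_upwards [h_mem, h_lim] with ω hmem hlim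
      exact hlim.congr' (hmem.mono fun n hn => (Set.indicator_of_mem hn _).symm)
  have h_off : Tendsto (fun n => ∫ ω in (A n)ᶜ, f n ω ∂μ) atTop (𝓝 0) :=
    squeeze_zero_norm (fun n => norm_setIntegral_le_of_norm_le_const_ae' (measure_lt_top _ _)
      ((h_bdd n).mono fun ω h _ => h)) h_small
  rw [← add_zero (∫ ω, F ω ∂μ)]
  exact (h_on.add h_off).congr fun n =>
    integral_add_compl (hA n) (Integrable.of_bound (hf n) (C n) (h_bdd n))

section Chernoff

variable {Ω : Type*} [MeasurableSpace Ω] {P : Measure Ω} [IsProbabilityMeasure P]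

lemma integrable_exp_neg_mul_of_nonneg {Y : Ω → ℝ} (hY : AEMeasurable Y P)
    (h0 : ∀ᵐ ω ∂P, 0 ≤ Y ω) {l : ℝ} (hl : 0 ≤ l) :
    Integrable (fun ω => exp (-l * Y ω)) P := by
  refine .of_mem_Icc 0 1 (measurable_exp.comp_aemeasurable (hY.const_mul _)) ?_
  filter_upwards [h0] with ω hω
  exact ⟨(exp_pos _).le, exp_le_one_iff.2 (by nlinarith)⟩

theorem mgf_neg_le_exp_of_nonneg {X : Ω → ℝ} (hX : ∀ᵐ ω ∂P, 0 ≤ X ω) (hX1 : Integrable X P)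
    (hX2 : Integrable (fun ω => X ω ^ 2) P) {l : ℝ} (hl : 0 ≤ l) :
    mgf X P (-l) ≤ exp (-l * P[X] + l ^ 2 / 2 * P[fun ω => X ω ^ 2]) := by
  have hlin : Integrable (fun ω => 1 - l * X ω) P := (integrable_const 1).sub (hX1.const_mul l)
  have hquad : Integrable (fun ω => 1 - l * X ω + l ^ 2 / 2 * X ω ^ 2) P :=
    hlin.add (hX2.const_mul _)
  calc mgf X P (-l) ≤ ∫ ω, (1 - l * X ω + l ^ 2 / 2 * X ω ^ 2) ∂P := by
        refine integral_mono_ae (integrable_exp_neg_mul_of_nonneg hX1.aemeasurable hX hl) hquad ?_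
        filter_upwards [hX] with ω hω
        have := exp_neg_le_one_sub_add_sq_div_two (mul_nonneg hl hω)
        rw [neg_mul]
        linarith
    _ = -l * P[X] + l ^ 2 / 2 * P[fun ω => X ω ^ 2] + 1 := by
        rw [integral_add hlin (hX2.const_mul _),
          integral_sub (integrable_const 1) (hX1.const_mul l), integral_const_mul,
          integral_const_mul]
        simp only [integral_const, probReal_univ, one_smul]
        ring
    _ ≤ _ := add_one_le_exp _

variable {X : ℕ → Ω → ℝ}

theorem measure_sum_range_le_le_pow (hmeas : ∀ i, Measurable (X i)) (hindep : iIndepFun X P)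
    (hident : ∀ i, IdentDistrib (X i) (X 0) P P) (hX : ∀ i, ∀ᵐ ω ∂P, 0 ≤ X i ω)
    (a : ℝ) {l : ℝ} (hl : 0 ≤ l) (p : ℕ) :
    P.real {ω | ∑ j ∈ range p, X j ω ≤ p * a} ≤ (exp (l * a) * mgf (X 0) P (-l)) ^ p := by
  have hint : Integrable (fun ω => exp (-l * (∑ j ∈ range p, X j) ω)) P := by
    refine integrable_exp_neg_mul_of_nonneg (by fun_prop) ?_ hl
    filter_upwards [ae_all_iff.2 hX] with ω hω
    simpa using sum_nonneg fun j _ => hω j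
  have h := measure_le_le_exp_mul_mgf (p * a) (neg_nonpos.2 hl) hint
  rw [hindep.mgf_sum hmeas, prod_congr rfl fun j _ => mgf_congr_of_identDistrib _ _ (hident j) _,
    prod_const, card_range] at h
  simp only [Finset.sum_apply] at h
  rw [neg_neg] at h
  rwa [mul_pow, ← exp_nat_mul, mul_left_comm]

theorem exists_measure_sum_range_div_le_le_pow (hmeas : ∀ i, Measurable (X i))
    (hindep : iIndepFun X P) (hident : ∀ i, IdentDistrib (X i) (X 0) P P)
    (hX : ∀ i, ∀ᵐ ω ∂P, 0 ≤ X i ω) (hX1 : Integrable (X 0) P)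
    (hX2 : Integrable (fun ω => X 0 ω ^ 2) P) {a : ℝ} (ha : a < P[X 0]) :
    ∃ r, 0 ≤ r ∧ r < 1 ∧ ∀ p : ℕ, P.real {ω | (∑ j ∈ range p, X j ω) / p ≤ a} ≤ r ^ p := by
  set m := P[X 0]
  set M := P[fun ω => X 0 ω ^ 2]
  have hM : 0 ≤ M := integral_nonneg fun ω => sq_nonneg _
  -- any `l > 0` with `l M / 2 < m - a` makes the Chernoff ratio below `1`
  set l := (m - a) / (M + 1)
  have hl : 0 < l := div_pos (by linarith) (by linarith)
  have hlM : l * M < m - a := by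
    rw [div_mul_eq_mul_div, div_lt_iff₀ (by linarith)]
    nlinarith
  refine ⟨exp (l * a) * mgf (X 0) P (-l), mul_nonneg (exp_pos _).le mgf_nonneg, ?_, fun p => ?_⟩
  · calc exp (l * a) * mgf (X 0) P (-l) ≤ exp (l * a) * exp (-l * m + l ^ 2 / 2 * M) :=
          mul_le_mul_of_nonneg_left (mgf_neg_le_exp_of_nonneg (hX 0) hX1 hX2 hl.le) (exp_pos _).le
      _ < 1 := by
          rw [← exp_add, exp_lt_one_iff]
          nlinarith
  · rcases p.eq_zero_or_pos with rfl | hp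
    · simp
    · simp_rw [div_le_iff₀' (Nat.cast_pos.2 hp : (0 : ℝ) < p)]
      exact measure_sum_range_le_le_pow hmeas hindep hident hX a hl.le p

end Chernoff

theorem fourth_moment_self_normalized_limit_general
    {Ω : Type*} [MeasurableSpace Ω] (P : Measure Ω) [IsProbabilityMeasure P]
    (w : ℕ → Ω → ℝ) (μ : ℝ)
    (hmeas : ∀ i, Measurable (w i))
    (hindep : iIndepFun w P)
    (hident : ∀ i j, IdentDistrib (w i) (w j) P P)
    (hpos : ∀ i, ∀ᵐ ω ∂P, 0 < w i ω)
    (hμ : ∫ ω, w 0 ω ∂P = μ) (hμpos : 0 < μ)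
    (hmom : ∀ k : ℕ, Integrable (fun ω => (w 0 ω) ^ k) P) :
    Tendsto (fun p : ℕ => ∫ ω, (w 0 ω / ((∑ j ∈ Finset.range p, w j ω) / p) - 1) ^ 4 ∂P)
      atTop (𝓝 (∫ ω, (w 0 ω / μ - 1) ^ 4 ∂P)) := by
  have hae : ∀ᵐ ω ∂P, ∀ i, 0 ≤ w i ω := ae_all_iff.2 fun i => (hpos i).mono fun _ h => h.le
  have hw1 : Integrable (w 0) P := by simpa using hmom 1
  obtain ⟨r, hr0, hr1, htail⟩ := exists_measure_sum_range_div_le_le_pow hmeas hindep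
    (fun i => hident i 0) (ae_all_iff.1 hae) hw1 (hmom 2) (a := μ / 2) (by rw [hμ]; linarith)
  have hslln : ∀ᵐ ω ∂P, Tendsto (fun p : ℕ => (∑ j ∈ range p, w j ω) / p) atTop (𝓝 μ) := by
    filter_upwards [strong_law_ae w hw1 (fun i j hij => hindep.indepFun hij)
      (fun i => hident i 0)] with ω h
    simpa [hμ, div_eq_inv_mul] using h
  refine tendsto_integral_of_dominated_on_of_tendsto_mul_measure_compl
    (A := fun p => {ω | μ / 2 < (∑ j ∈ range p, w j ω) / p})
    (g := fun ω => 1 + (w 0 ω / (μ / 2)) ^ 4)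
    (fun p => Measurable.aestronglyMeasurable (by fun_prop))
    (fun p => measurableSet_lt (by fun_prop) (by fun_prop)) ?_ (fun p => ?_) (fun p => ?_)
    (tendsto_one_add_pow_mul_of_le_geometric 4 (fun _ => measureReal_nonneg)
      (fun p => by simpa only [Set.compl_ofPred, not_lt] using htail p) hr0 hr1)
    (hslln.mono fun ω h => h.eventually (lt_mem_nhds (by linarith)))
    (hslln.mono fun ω h => ((tendsto_const_nhds.div h hμpos.ne').sub_const 1).pow 4)
  · simp_rw [div_pow]
    exact (integrable_const 1).add ((hmom 4).div_const _)
  · filter_upwards [hae] with ω hω hA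
    exact norm_sub_one_pow_four_le (div_sum_range_div_mem_Icc hω p).1
      (div_le_div_of_nonneg_left (hω 0) (half_pos hμpos) hA.le)
  · filter_upwards [hae] with ω hω
    exact norm_sub_one_pow_four_le (div_sum_range_div_mem_Icc hω p).1
      (div_sum_range_div_mem_Icc hω p).2

/-- For i.i.d. strictly positive random variables with all moments finite,
`lim_{p→∞} E[(w₁/w̄_p − 1)⁴] = E[(w₁/μ − 1)⁴]`. -/
theorem fourth_moment_self_normalized_limit
    {Ω : Type*} [MeasurableSpace Ω] (P : Measure Ω) [IsProbabilityMeasure P]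
    (w : ℕ → Ω → ℝ) (μ σ : ℝ)
    (hmeas : ∀ i, Measurable (w i))
    (hindep : iIndepFun w P)
    (hident : ∀ i j, IdentDistrib (w i) (w j) P P)
    (hpos : ∀ i, ∀ᵐ ω ∂P, 0 < w i ω)
    (hμ : ∫ ω, w 0 ω ∂P = μ) (hμpos : 0 < μ)
    (hσ : ∫ ω, (w 0 ω - μ) ^ 2 ∂P = σ ^ 2) (hσpos : 0 < σ)
    (hmom : ∀ k : ℕ, Integrable (fun ω => (w 0 ω) ^ k) P) :
    Tendsto (fun p : ℕ => ∫ ω, (w 0 ω / ((∑ j ∈ Finset.range p, w j ω) / p) - 1) ^ 4 ∂P)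
      atTop (𝓝 (∫ ω, (w 0 ω / μ - 1) ^ 4 ∂P)) :=
  fourth_moment_self_normalized_limit_general P w μ hmeas hindep hident hpos hμ hμpos hmom
end

section
/- Let p ≥ 3 and let w₁, …, w_p be i.i.d. random variables, strictly positive almost surely, with w̄ = p^{−1}∑_{j=1}^p w_j, and set R_j = w_j/w̄ − 1 for 1 ≤ j ≤ p. Then for all pairwise distinct indices i, j, k, E[R_i² R_j R_k] = η₄/((p − 1)(p − 2)) − η₁₂/(p − 2), where η₄ = E[R₁⁴] and η₁₂ = E[R₁² R₂²]. -/
/-!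
Since the `w_j` are i.i.d., the vector `(w_1, …, w_p)` is exchangeable, and so is
`(R_1, …, R_p)`, an equivariant function of it. Hence a moment `E[R_a R_b R_c R_d]` only depends
on which of the indices coincide. Multiplying `∑_l R_l = 0` by `R_i³` and by `R_i² R_j` and
taking expectations gives the two linear relations
`η₄ + (p - 1) E[R_i³ R_j] = 0` and `E[R_i³ R_j] + η₁₂ + (p - 2) E[R_i² R_j R_k] = 0`,
whose solution is the claimed formula.
-/

open MeasureTheory ProbabilityTheory
open scoped BigOperators

theorem Finset.sum_eq_sum_add_card_compl_mul {ι R : Type*} [Fintype ι] [DecidableEq ι]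
    [CommRing R] (s : Finset ι) {f : ι → R} {c : R} (h : ∀ l ∉ s, f l = c) :
    ∑ l, f l = ∑ l ∈ s, f l + ((Fintype.card ι : R) - s.card) * c := by
  rw [← Finset.sum_add_sum_compl s, Finset.sum_congr rfl fun l hl => h l (Finset.mem_compl.1 hl),
    Finset.sum_const, Finset.card_compl, nsmul_eq_mul, Nat.cast_sub s.card_le_univ]

theorem Equiv.Perm.exists_apply_eq_and_apply_eq {ι : Type*} [DecidableEq ι] {a b a' b' : ι}
    (hab : a ≠ b) (hab' : a' ≠ b') : ∃ σ : Equiv.Perm ι, σ a = a' ∧ σ b = b' := by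
  have hb : Equiv.swap a a' b ≠ a' := by
    simpa [Equiv.swap_apply_left] using (Equiv.swap a a').injective.ne hab.symm
  refine ⟨(Equiv.swap a a').trans (Equiv.swap (Equiv.swap a a' b) b'), ?_, ?_⟩
  · simp [Equiv.swap_apply_of_ne_of_ne hb.symm hab']
  · simp

theorem MeasureTheory.MemLp.integrable_mul_mul_mul {Ω : Type*} [MeasurableSpace Ω]
    {P : Measure Ω} {f g h k : Ω → ℝ} (hf : MemLp f 4 P) (hg : MemLp g 4 P) (hh : MemLp h 4 P)
    (hk : MemLp k 4 P) : Integrable (fun ω => f ω * g ω * h ω * k ω) P := by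
  have : ENNReal.HolderTriple 4 4 2 := ⟨by
    rw [← two_mul, show (4 : ENNReal) = 2 * 2 by norm_num, ENNReal.mul_inv (by simp) (by simp),
      ← mul_assoc, ENNReal.mul_inv_cancel (by simp) (by simp), one_mul]⟩
  have hfg : MemLp (fun ω => f ω * g ω) 2 P := hg.mul' hf
  have hhk : MemLp (fun ω => h ω * k ω) 2 P := hk.mul' hh
  simpa only [Pi.mul_def, mul_assoc] using hfg.integrable_mul hhk

theorem MeasureTheory.sum_integral_mul_eq_zero {Ω ι : Type*} [MeasurableSpace Ω] [Fintype ι]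
    {P : Measure Ω} {G : Ω → ℝ} {R : ι → Ω → ℝ} (hint : ∀ l, Integrable (fun ω => G ω * R l ω) P)
    (hsum : ∀ᵐ ω ∂P, ∑ l, R l ω = 0) : ∑ l, ∫ ω, G ω * R l ω ∂P = 0 := by
  rw [← integral_finsetSum _ fun l _ => hint l]
  refine integral_eq_zero_of_ae ?_
  filter_upwards [hsum] with ω hω
  rw [Pi.zero_apply, ← Finset.mul_sum, hω, mul_zero]

namespace ProbabilityTheory

variable {Ω ι β : Type*} [MeasurableSpace Ω] [MeasurableSpace β] {P : Measure Ω}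

def Exchangeable (X : ι → Ω → β) (P : Measure Ω) : Prop :=
  ∀ σ : Equiv.Perm ι, IdentDistrib (fun ω i => X (σ i) ω) (fun ω i => X i ω) P P

theorem iIndepFun.exchangeable [Fintype ι] {X : ι → Ω → β} (hX : ∀ i, AEMeasurable (X i) P)
    (hindep : iIndepFun X P) (hident : ∀ i j, IdentDistrib (X i) (X j) P P) :
    Exchangeable X P := fun σ =>
  { aemeasurable_fst := aemeasurable_pi_lambda _ fun i => hX (σ i)
    aemeasurable_snd := aemeasurable_pi_lambda _ hX
    map_eq := by
      rw [(hindep.precomp σ.injective).map_fun_eq_pi_map fun i => hX (σ i),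
        hindep.map_fun_eq_pi_map hX]
      exact congrArg Measure.pi (funext fun i => (hident (σ i) i).map_eq) }

theorem Exchangeable.comp_equivariant {γ : Type*} [MeasurableSpace γ] {X : ι → Ω → β}
    (hX : Exchangeable X P) {Φ : (ι → β) → ι → γ} (hΦ : Measurable Φ)
    (hΦσ : ∀ (σ : Equiv.Perm ι) x, Φ (x ∘ σ) = Φ x ∘ σ) :
    Exchangeable (fun i ω => Φ (fun l => X l ω) i) P := by
  intro σ
  convert (hX σ).comp hΦ using 1
  · exact funext fun ω => (hΦσ σ fun l => X l ω).symm
  · rfl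

theorem Exchangeable.integral_comp_perm {X : ι → Ω → β} (hX : Exchangeable X P)
    (σ : Equiv.Perm ι) {F : (ι → β) → ℝ} (hF : Measurable F) :
    ∫ ω, F (fun i => X (σ i) ω) ∂P = ∫ ω, F (fun i => X i ω) ∂P :=
  ((hX σ).comp hF).integral_eq

theorem Exchangeable.identDistrib_prodMk [DecidableEq ι] {X : ι → Ω → β} (hX : Exchangeable X P)
    {a b a' b' : ι} (hab : a ≠ b) (hab' : a' ≠ b') :
    IdentDistrib (fun ω => (X a ω, X b ω)) (fun ω => (X a' ω, X b' ω)) P P := by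
  obtain ⟨σ, ha, hb⟩ := Equiv.Perm.exists_apply_eq_and_apply_eq hab' hab
  have h := (hX σ).comp ((measurable_pi_apply a').prodMk (measurable_pi_apply b'))
  simpa only [Function.comp_def, ha, hb] using h

section Moments

variable [DecidableEq ι] {R : ι → Ω → ℝ}

theorem Exchangeable.integral_mul_mul_mul_eq_of_notMem (hR : Exchangeable R P) {a b c l m : ι}
    (hl : l ∉ ({a, b, c} : Finset ι)) (hm : m ∉ ({a, b, c} : Finset ι)) :
    ∫ ω, R a ω * R b ω * R c ω * R l ω ∂P = ∫ ω, R a ω * R b ω * R c ω * R m ω ∂P := by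
  simp only [Finset.mem_insert, Finset.mem_singleton, not_or] at hl hm
  have h := hR.integral_comp_perm (Equiv.swap l m) (F := fun x => x a * x b * x c * x l)
    (by fun_prop)
  beta_reduce at h
  rwa [Equiv.swap_apply_of_ne_of_ne (Ne.symm hl.1) (Ne.symm hm.1),
    Equiv.swap_apply_of_ne_of_ne (Ne.symm hl.2.1) (Ne.symm hm.2.1),
    Equiv.swap_apply_of_ne_of_ne (Ne.symm hl.2.2) (Ne.symm hm.2.2),
    Equiv.swap_apply_left, eq_comm] at h

variable [Fintype ι]

theorem Exchangeable.sum_integral_mul_mul_mul (hR : Exchangeable R P)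
    (hLp : ∀ l, MemLp (R l) 4 P) (hsum : ∀ᵐ ω ∂P, ∑ l, R l ω = 0) {a b c m : ι}
    (hm : m ∉ ({a, b, c} : Finset ι)) :
    ∑ l ∈ {a, b, c}, ∫ ω, R a ω * R b ω * R c ω * R l ω ∂P +
      ((Fintype.card ι : ℝ) - ({a, b, c} : Finset ι).card) *
        ∫ ω, R a ω * R b ω * R c ω * R m ω ∂P = 0 := by
  rw [← Finset.sum_eq_sum_add_card_compl_mul _
    fun l hl => hR.integral_mul_mul_mul_eq_of_notMem hl hm]
  exact sum_integral_mul_eq_zero (G := fun ω => R a ω * R b ω * R c ω)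
    (fun l => (hLp a).integrable_mul_mul_mul (hLp b) (hLp c) (hLp l)) hsum

theorem Exchangeable.integral_sq_mul_mul (hR : Exchangeable R P)
    (hLp : ∀ l, MemLp (R l) 4 P) (hsum : ∀ᵐ ω ∂P, ∑ l, R l ω = 0) {i j k : ι}
    (hij : i ≠ j) (hjk : j ≠ k) (hik : i ≠ k) :
    ∫ ω, R i ω ^ 2 * R j ω * R k ω ∂P =
      (∫ ω, R i ω ^ 4 ∂P) / (((Fintype.card ι : ℝ) - 1) * ((Fintype.card ι : ℝ) - 2)) -
        (∫ ω, R i ω ^ 2 * R j ω ^ 2 ∂P) / ((Fintype.card ι : ℝ) - 2) := by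
  have h3 := hR.sum_integral_mul_mul_mul hLp hsum (a := i) (b := i) (c := i) (m := j)
    (by simp [hij.symm])
  have h2 := hR.sum_integral_mul_mul_mul hLp hsum (a := i) (b := i) (c := j) (m := k)
    (by simp [hik.symm, hjk.symm])
  simp only [Finset.mem_singleton, Finset.insert_eq_of_mem, Finset.sum_singleton,
    Finset.card_singleton, Nat.cast_one, Finset.mem_insert, hij, or_false, not_false_eq_true,
    Finset.sum_insert, Finset.card_insert_of_notMem, Nat.reduceAdd, Nat.cast_ofNat] at h3 h2
  have hcard : (3 : ℝ) ≤ Fintype.card ι := by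
    exact_mod_cast Fintype.two_lt_card_iff.2 ⟨i, j, k, hij, hik, hjk⟩
  have hjiji : ∫ ω, R i ω * R i ω * R j ω * R i ω ∂P = ∫ ω, R i ω * R i ω * R i ω * R j ω ∂P :=
    integral_congr_ae (.of_forall fun ω => mul_right_comm _ _ _)
  simp only [pow_succ, pow_zero, one_mul, ← mul_assoc]
  rw [hjiji] at h2
  have hp1 : (Fintype.card ι : ℝ) - 1 ≠ 0 := by linarith
  have hp2 : (Fintype.card ι : ℝ) - 2 ≠ 0 := by linarith
  rw [div_sub_div _ _ (mul_ne_zero hp1 hp2) hp2,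
    eq_div_iff (mul_ne_zero (mul_ne_zero hp1 hp2) hp2)]
  linear_combination ((Fintype.card ι : ℝ) - 1) * ((Fintype.card ι : ℝ) - 2) * h2 -
    ((Fintype.card ι : ℝ) - 2) * h3

end Moments

end ProbabilityTheory

section MeanDeviation

variable {ι : Type*} [Fintype ι]

noncomputable def meanDeviation (x : ι → ℝ) (j : ι) : ℝ :=
  x j / ((∑ l, x l) / Fintype.card ι) - 1

theorem meanDeviation_comp_perm (σ : Equiv.Perm ι) (x : ι → ℝ) :
    meanDeviation (x ∘ σ) = meanDeviation x ∘ σ := by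
  funext j
  simp only [meanDeviation, Function.comp_apply, Equiv.sum_comp σ x]

theorem measurable_meanDeviation : Measurable (meanDeviation : (ι → ℝ) → ι → ℝ) := by
  unfold meanDeviation
  fun_prop

theorem sum_meanDeviation {x : ι → ℝ} (hx : ∑ l, x l ≠ 0) : ∑ j, meanDeviation x j = 0 := by
  have hcard : (Fintype.card ι : ℝ) ≠ 0 := by
    intro h
    simp_all [Fintype.card_eq_zero_iff]
  simp only [meanDeviation, Finset.sum_sub_distrib, ← Finset.sum_div, Finset.sum_const,
    Finset.card_univ, nsmul_eq_mul, mul_one]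
  field_simp
  ring

theorem abs_meanDeviation_le {x : ι → ℝ} (hx : ∀ l, 0 < x l) (j : ι) :
    |meanDeviation x j| ≤ Fintype.card ι := by
  have hS : 0 < ∑ l, x l := Finset.sum_pos (fun l _ => hx l) ⟨j, Finset.mem_univ j⟩
  have hle : x j ≤ ∑ l, x l := Finset.single_le_sum (fun l _ => (hx l).le) (Finset.mem_univ j)
  have hcard : (1 : ℝ) ≤ Fintype.card ι := by exact_mod_cast Fintype.card_pos_iff.2 ⟨j⟩
  have hratio : meanDeviation x j + 1 = Fintype.card ι * (x j / ∑ l, x l) := by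
    simp only [meanDeviation]
    field_simp
    ring
  have h0 : 0 ≤ x j / ∑ l, x l := div_nonneg (hx j).le hS.le
  have h1 : x j / ∑ l, x l ≤ 1 := (div_le_one hS).2 hle
  rw [abs_le]
  constructor <;> nlinarith

end MeanDeviation

/-- For `p ≥ 3` i.i.d. strictly positive random variables with sample mean `w̄` and
`R_j = w_j/w̄ − 1`: for pairwise distinct `i, j, k`,
`E[R_i² R_j R_k] = η₄/((p−1)(p−2)) − η₁₂/(p−2)` where `η₄ = E[R₁⁴]`, `η₁₂ = E[R₁² R₂²]`. -/
theorem compositional_square_cross_moment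
    {Ω : Type*} [MeasurableSpace Ω] (P : Measure Ω) [IsProbabilityMeasure P]
    (p : ℕ) (hp : 3 ≤ p) (w : Fin p → Ω → ℝ)
    (hmeas : ∀ j, Measurable (w j))
    (hindep : iIndepFun w P)
    (hident : ∀ i j, IdentDistrib (w i) (w j) P P)
    (hpos : ∀ j, ∀ᵐ ω ∂P, 0 < w j ω)
    (η₄ η₁₂ : ℝ)
    (hη₄ : η₄ = ∫ ω, (w ⟨0, by omega⟩ ω / ((∑ k, w k ω) / p) - 1) ^ 4 ∂P)
    (hη₁₂ : η₁₂ = ∫ ω, (w ⟨0, by omega⟩ ω / ((∑ k, w k ω) / p) - 1) ^ 2 *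
        (w ⟨1, by omega⟩ ω / ((∑ k, w k ω) / p) - 1) ^ 2 ∂P) :
    ∀ i j k, i ≠ j → j ≠ k → i ≠ k →
      ∫ ω, (w i ω / ((∑ l, w l ω) / p) - 1) ^ 2 *
           (w j ω / ((∑ l, w l ω) / p) - 1) *
           (w k ω / ((∑ l, w l ω) / p) - 1) ∂P =
        η₄ / (((p : ℝ) - 1) * ((p : ℝ) - 2)) - η₁₂ / ((p : ℝ) - 2) := by
  intro i j k hij hjk hik
  set R : Fin p → Ω → ℝ := fun l ω => meanDeviation (fun m => w m ω) l with hR_def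
  have hR : Exchangeable R P :=
    (hindep.exchangeable (fun l => (hmeas l).aemeasurable) hident).comp_equivariant
      measurable_meanDeviation meanDeviation_comp_perm
  have hpos' : ∀ᵐ ω ∂P, ∀ l, 0 < w l ω := ae_all_iff.2 hpos
  have hLp : ∀ l, MemLp (R l) 4 P := fun l =>
    MemLp.of_bound (((measurable_pi_apply l).comp measurable_meanDeviation).comp
      (measurable_pi_lambda _ hmeas)).aestronglyMeasurable p
      (hpos'.mono fun ω hω => by simpa using abs_meanDeviation_le hω l)
  have hsum : ∀ᵐ ω ∂P, ∑ l, R l ω = 0 := hpos'.mono fun ω hω =>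
    sum_meanDeviation (Finset.sum_pos (fun l _ => hω l) ⟨i, Finset.mem_univ i⟩).ne'
  have hR_eq : ∀ l ω, w l ω / ((∑ m, w m ω) / p) - 1 = R l ω := by
    simp [hR_def, meanDeviation]
  have h01 : (⟨0, by omega⟩ : Fin p) ≠ ⟨1, by omega⟩ := by simp
  have h4 : ∫ ω, R ⟨0, by omega⟩ ω ^ 4 ∂P = ∫ ω, R i ω ^ 4 ∂P :=
    ((hR.identDistrib_prodMk h01 hij).comp
      (by fun_prop : Measurable fun x : ℝ × ℝ => x.1 ^ 4)).integral_eq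
  have h22 : ∫ ω, R ⟨0, by omega⟩ ω ^ 2 * R ⟨1, by omega⟩ ω ^ 2 ∂P =
      ∫ ω, R i ω ^ 2 * R j ω ^ 2 ∂P :=
    ((hR.identDistrib_prodMk h01 hij).comp
      (by fun_prop : Measurable fun x : ℝ × ℝ => x.1 ^ 2 * x.2 ^ 2)).integral_eq
  simp only [hR_eq] at hη₄ hη₁₂ ⊢
  rw [hη₄, hη₁₂, h4, h22]
  simpa only [Fintype.card_fin] using hR.integral_sq_mul_mul hLp hsum hij hjk hik
end

section
/- Let S be a p×p Hermitian complex matrix, r ∈ ℂ^p, and z ∈ ℂ with Im z > 0. Then for every p×p complex matrix A, | tr( ((S + r r* − z I_p)^{−1} − (S − z I_p)^{−1}) A ) | ≤ ‖A‖ / Im z, where r r* is the rank-one matrix with entries r_i conj(r_j), ‖A‖ is the spectral norm of A, and both resolvents exist since Im z > 0. -/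
/-!
By Sherman–Morrison, with `R = (S - z)⁻¹`, `u = R r` and `w = 1 + r* u`, the trace equals
`-(R* r)* A u / w`. Writing `r = (S - z) u` gives `r* u = u* S u - z̄ ‖u‖²` with `u* S u` real,
so `Im w = Im z ‖u‖²` and `|w| ≥ Im z ‖u‖²`. The same identity for `R* = (S - z̄)⁻¹` shows
`‖R* r‖ = ‖u‖`, so the numerator is at most `‖A‖ ‖u‖²`.
-/

open scoped BigOperators ComplexOrder

/-- The spectral norm of a complex matrix. -/
noncomputable def specNorm {p n : ℕ} (A : Matrix (Fin p) (Fin n) ℂ) : ℝ :=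
  ‖LinearMap.toContinuousLinearMap (Matrix.toEuclideanLin A)‖

open Matrix

section ShermanMorrison

variable {n K : Type*} [Fintype n] [DecidableEq n] [Field K]

theorem Matrix.inv_add_sub_inv {B Q : Matrix n n K} (hB : IsUnit B.det)
    (hBQ : IsUnit (B + Q).det) : (B + Q)⁻¹ - B⁻¹ = -((B + Q)⁻¹ * Q * B⁻¹) := by
  have : (B + Q)⁻¹ * Q * B⁻¹ = (B + Q)⁻¹ * (B + Q) * B⁻¹ - (B + Q)⁻¹ * (B * B⁻¹) := by
    noncomm_ring
  rw [this, nonsing_inv_mul _ hBQ, mul_nonsing_inv _ hB, Matrix.one_mul, Matrix.mul_one, neg_sub]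

theorem Matrix.inv_add_vecMulVec_mulVec {B : Matrix n n K} {r s : n → K} (hB : IsUnit B.det)
    (hBrs : IsUnit (B + vecMulVec r s).det) :
    (B + vecMulVec r s)⁻¹ *ᵥ r = (1 + s ⬝ᵥ B⁻¹ *ᵥ r)⁻¹ • B⁻¹ *ᵥ r := by
  set u := B⁻¹ *ᵥ r
  set w := 1 + s ⬝ᵥ u
  have key : (B + vecMulVec r s) *ᵥ u = w • r := by
    rw [add_mulVec, mulVec_mulVec, mul_nonsing_inv _ hB, one_mulVec, vecMulVec_mulVec,
      op_smul_eq_smul, add_smul, one_smul]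
  have hw : w ≠ 0 := by
    intro hw
    have hu : u = 0 := by
      rw [← one_mulVec u, ← nonsing_inv_mul _ hBrs, ← mulVec_mulVec, key, hw, zero_smul,
        mulVec_zero]
    simp [w, hu] at hw
  calc (B + vecMulVec r s)⁻¹ *ᵥ r
      = w⁻¹ • (B + vecMulVec r s)⁻¹ *ᵥ ((B + vecMulVec r s) *ᵥ u) := by
        rw [key, mulVec_smul, smul_smul, inv_mul_cancel₀ hw, one_smul]
    _ = w⁻¹ • u := by rw [mulVec_mulVec, nonsing_inv_mul _ hBrs, one_mulVec]

theorem Matrix.trace_inv_add_vecMulVec_sub_inv_mul {B : Matrix n n K} {r s : n → K}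
    (hB : IsUnit B.det) (hBrs : IsUnit (B + vecMulVec r s).det) (A : Matrix n n K) :
    trace (((B + vecMulVec r s)⁻¹ - B⁻¹) * A) =
      -((s ᵥ* B⁻¹) ⬝ᵥ A *ᵥ B⁻¹ *ᵥ r) / (1 + s ⬝ᵥ B⁻¹ *ᵥ r) := by
  rw [inv_add_sub_inv hB hBrs, neg_mul, trace_neg, mul_vecMulVec, Matrix.mul_assoc,
    vecMulVec_mul, trace_vecMulVec, inv_add_vecMulVec_mulVec hB hBrs, dotProduct_comm,
    ← vecMul_vecMul, ← dotProduct_mulVec, mulVec_smul, dotProduct_smul, smul_eq_mul,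
    neg_div, inv_mul_eq_div]

end ShermanMorrison

variable {n : Type*} [Fintype n]

theorem star_dotProduct_self_eq_norm_sq (v : n → ℂ) :
    star v ⬝ᵥ v = (‖WithLp.toLp 2 v‖ : ℂ) ^ 2 := by
  have h := inner_self_eq_norm_sq_to_K (𝕜 := ℂ) (WithLp.toLp 2 v)
  rwa [EuclideanSpace.inner_toLp_toLp, dotProduct_comm] at h

theorem norm_star_dotProduct_mulVec_le {p : ℕ} (A : Matrix (Fin p) (Fin p) ℂ) (x y : Fin p → ℂ) :
    ‖star x ⬝ᵥ A *ᵥ y‖ ≤ specNorm A * ‖WithLp.toLp 2 x‖ * ‖WithLp.toLp 2 y‖ := by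
  have h : star x ⬝ᵥ A *ᵥ y = inner ℂ (WithLp.toLp 2 x) (toEuclideanLin A (WithLp.toLp 2 y)) := by
    rw [dotProduct_comm]; rfl
  rw [h, mul_assoc, mul_left_comm]
  exact (norm_inner_le_norm _ _).trans (mul_le_mul_of_nonneg_left
    ((LinearMap.toContinuousLinearMap (toEuclideanLin A)).le_opNorm _) (norm_nonneg _))

variable [DecidableEq n] {M : Matrix n n ℂ}

theorem Matrix.IsHermitian.im_star_dotProduct_sub_smul_one_mulVec (hM : M.IsHermitian) (z : ℂ)
    (v : n → ℂ) : (star v ⬝ᵥ (M - z • 1) *ᵥ v).im = -z.im * ‖WithLp.toLp 2 v‖ ^ 2 := by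
  rw [sub_mulVec, smul_mulVec, one_mulVec, dotProduct_sub, dotProduct_smul, smul_eq_mul,
    star_dotProduct_self_eq_norm_sq, Complex.sub_im]
  have h := hM.im_star_dotProduct_mulVec_self v
  simp_all [Complex.mul_im, ← Complex.ofReal_pow]

theorem Matrix.IsHermitian.isUnit_det_sub_smul_one (hM : M.IsHermitian) {z : ℂ} (hz : z.im ≠ 0) :
    IsUnit (M - z • 1).det := by
  rw [isUnit_iff_ne_zero, Ne, ← exists_mulVec_eq_zero_iff]
  rintro ⟨v, hv, hMv⟩
  have h := hM.im_star_dotProduct_sub_smul_one_mulVec z v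
  rw [hMv, dotProduct_zero, Complex.zero_im, eq_comm, mul_eq_zero, neg_eq_zero] at h
  simp_all

theorem Matrix.IsHermitian.im_star_dotProduct_inv_sub_smul_one_mulVec (hM : M.IsHermitian)
    {z : ℂ} (hz : z.im ≠ 0) (r : n → ℂ) :
    (star r ⬝ᵥ (M - z • 1)⁻¹ *ᵥ r).im = z.im * ‖WithLp.toLp 2 ((M - z • 1)⁻¹ *ᵥ r)‖ ^ 2 := by
  set u := (M - z • 1)⁻¹ *ᵥ r
  have hr : r = (M - z • 1) *ᵥ u := by
    rw [mulVec_mulVec, mul_nonsing_inv _ (hM.isUnit_det_sub_smul_one hz), one_mulVec]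
  rw [star_dotProduct, Complex.star_def, Complex.conj_im, hr,
    hM.im_star_dotProduct_sub_smul_one_mulVec, neg_mul, neg_neg]

theorem Matrix.IsHermitian.norm_conjTranspose_inv_sub_smul_one_mulVec (hM : M.IsHermitian)
    {z : ℂ} (hz : z.im ≠ 0) (r : n → ℂ) :
    ‖WithLp.toLp 2 ((M - z • 1)⁻¹ᴴ *ᵥ r)‖ = ‖WithLp.toLp 2 ((M - z • 1)⁻¹ *ᵥ r)‖ := by
  have hadj : (M - z • 1)⁻¹ᴴ = (M - star z • 1)⁻¹ := by
    rw [conjTranspose_nonsing_inv, conjTranspose_sub, hM.eq, conjTranspose_smul,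
      conjTranspose_one]
  have hdot : star r ⬝ᵥ (M - z • 1)⁻¹ᴴ *ᵥ r = star (star r ⬝ᵥ (M - z • 1)⁻¹ *ᵥ r) := by
    rw [star_dotProduct, star_mulVec, conjTranspose_conjTranspose, ← dotProduct_mulVec]
  have h := hM.im_star_dotProduct_inv_sub_smul_one_mulVec hz r
  have hconj := hM.im_star_dotProduct_inv_sub_smul_one_mulVec (z := star z) (by simpa using hz) r
  rw [← hadj, hdot, Complex.star_def, Complex.conj_im, h, Complex.conj_im, neg_mul, neg_inj,
    mul_right_inj' hz] at hconj
  exact (pow_left_inj₀ (norm_nonneg _) (norm_nonneg _) two_ne_zero).1 hconj.symm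

/-- Rank-one perturbation bound for resolvents: if `S` is Hermitian, `r ∈ ℂ^p`, and
`Im z > 0`, then for every matrix `A`,
`| tr( ((S + r r* − z I)⁻¹ − (S − z I)⁻¹) A ) | ≤ ‖A‖ / Im z`. -/
theorem resolvent_rank_one_trace_bound {p : ℕ} (S : Matrix (Fin p) (Fin p) ℂ)
    (hS : S.IsHermitian) (r : Fin p → ℂ) (z : ℂ) (hz : 0 < z.im)
    (A : Matrix (Fin p) (Fin p) ℂ) :
    ‖Matrix.trace
        (((S + Matrix.of (fun i j => r i * (starRingEnd ℂ) (r j)) - z • 1)⁻¹ -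
            (S - z • 1)⁻¹) * A)‖ ≤ specNorm A / z.im := by
  have hQ : (vecMulVec r (star r)).IsHermitian := by
    rw [IsHermitian, conjTranspose_vecMulVec, star_star]
  have hB := hS.isUnit_det_sub_smul_one hz.ne'
  have hBQ : IsUnit (S - z • 1 + vecMulVec r (star r)).det := by
    rw [sub_add_eq_add_sub]
    exact (hS.add hQ).isUnit_det_sub_smul_one hz.ne'
  have hx : star r ᵥ* (S - z • 1)⁻¹ = star ((S - z • 1)⁻¹ᴴ *ᵥ r) := by
    rw [star_mulVec, conjTranspose_conjTranspose]
  change ‖trace (((S + vecMulVec r (star r) - z • 1)⁻¹ - (S - z • 1)⁻¹) * A)‖ ≤ _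
  rw [add_sub_right_comm, trace_inv_add_vecMulVec_sub_inv_mul hB hBQ, hx, norm_div, norm_neg]
  set u := (S - z • 1)⁻¹ *ᵥ r
  set w := 1 + star r ⬝ᵥ u
  have hw_im : w.im = z.im * ‖WithLp.toLp 2 u‖ ^ 2 := by
    rw [Complex.add_im, Complex.one_im, zero_add]
    exact hS.im_star_dotProduct_inv_sub_smul_one_mulVec hz.ne' r
  have hw : z.im * ‖WithLp.toLp 2 u‖ ^ 2 ≤ ‖w‖ :=
    hw_im ▸ (le_abs_self _).trans (Complex.abs_im_le_norm w)
  calc _ ≤ specNorm A * ‖WithLp.toLp 2 u‖ ^ 2 / ‖w‖ := by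
        grw [norm_star_dotProduct_mulVec_le, hS.norm_conjTranspose_inv_sub_smul_one_mulVec hz.ne']
        rw [sq, ← mul_assoc]
    _ ≤ specNorm A / z.im := by
        rcases (norm_nonneg w).eq_or_lt with hw0 | hw0
        · rw [← hw0, div_zero]
          exact div_nonneg (norm_nonneg _) hz.le
        · rw [div_le_div_iff₀ hw0 hz, mul_assoc]
          exact mul_le_mul_of_nonneg_left (by linarith) (norm_nonneg _)
end
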